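/- arXiv:1803.08379 — 9 statements merged into one kernel-verified Lean document; each statement's English description precedes it below -/
import Mathlib

section
/- Let n ≥ 1 and k ≥ 1 be integers and let μ¹, …, μᵏ be partitions of n, where μˢ has parts μ₁ˢ ≥ μ₂ˢ ≥ …. If the rigidity condition d_μ = 0 holds, i.e. (k−2)·n² + 2 = Σ_{s=1}^{k} Σ_i (μ_iˢ)², then Σ_{s=1}^{k} μ₁ˢ > (k−2)·n. (This is the inequality guaranteeing that Katz's middle-convolution move A strictly decreases the rank, so Goursat's reduction algorithm terminates.) -/
/-!
Every part of `μˢ` is at most `μ₁ˢ`, so `Σᵢ (μᵢˢ)² ≤ μ₁ˢ · n`. Summing over `s`, rigidity gives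
`(k−2)n² + 2 ≤ n · Σₛ μ₁ˢ`, which forces `n > 0` and then `Σₛ μ₁ˢ > (k−2)n`.
-/

theorem List.sum_map_sq_le_mul_sum {R : Type*} [CommSemiring R] [PartialOrder R]
    [IsOrderedRing R] {l : List R} {m : R} (hnonneg : ∀ x ∈ l, 0 ≤ x) (hle : ∀ x ∈ l, x ≤ m) :
    (l.map (· ^ 2)).sum ≤ m * l.sum :=
  calc (l.map (· ^ 2)).sum
      ≤ (l.map (m * ·)).sum := List.sum_le_sum fun x hx => by
        rw [sq]; exact mul_le_mul_of_nonneg_right (hle x hx) (hnonneg x hx)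
    _ = m * l.sum := by rw [List.sum_map_mul_left, List.map_id']

theorem List.Pairwise.sum_map_sq_le_head!_mul_sum {l : List ℕ} (hl : l.Pairwise (· ≥ ·)) :
    (l.map (fun x => (x : ℤ) ^ 2)).sum ≤ (l.head! : ℤ) * (l.sum : ℤ) := by
  -- `l.map (fun x => (x : ℤ) ^ 2)` elaborates as a map over the monadic lift of `l` to `List ℤ`
  simp only [List.pure_def, List.bind_eq_flatMap, ← List.map_eq_flatMap, Nat.cast_list_sum]
  exact List.sum_map_sq_le_mul_sum (by simp) (by simpa using fun x hx => hl.head!_le hx)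

theorem stmt_1_general (n k : ℕ) (μ : Fin k → List ℕ)
    (hsorted : ∀ s, (μ s).Pairwise (· ≥ ·))
    (hsum : ∀ s, (μ s).sum = n)
    (hrigid : ((k : ℤ) - 2) * (n : ℤ) ^ 2 + 2 =
      ∑ s : Fin k, (((μ s).map (fun x => (x : ℤ) ^ 2)).sum)) :
    (∑ s : Fin k, ((μ s).head! : ℤ)) > ((k : ℤ) - 2) * (n : ℤ) := by
  have hbound : ((k : ℤ) - 2) * (n : ℤ) ^ 2 + 2 ≤ (∑ s : Fin k, ((μ s).head! : ℤ)) * n := by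
    rw [hrigid, Finset.sum_mul]
    exact Finset.sum_le_sum fun s _ => hsum s ▸ (hsorted s).sum_map_sq_le_head!_mul_sum
  nlinarith [Int.natCast_nonneg n]

/-- If `μ¹, …, μᵏ` are partitions of `n ≥ 1` (non-increasing lists of positive
integers summing to `n`) satisfying the rigidity condition
`(k−2)·n² + 2 = Σ_s Σ_i (μᵢˢ)²`, then `Σ_s μ₁ˢ > (k−2)·n`. -/
theorem stmt_1 (n k : ℕ) (hn : 1 ≤ n) (hk : 1 ≤ k) (μ : Fin k → List ℕ)
    (hsorted : ∀ s, (μ s).Pairwise (· ≥ ·))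
    (hpos : ∀ s, ∀ x ∈ μ s, 1 ≤ x)
    (hsum : ∀ s, (μ s).sum = n)
    (hrigid : ((k : ℤ) - 2) * (n : ℤ) ^ 2 + 2 =
      ∑ s : Fin k, (((μ s).map (fun x => (x : ℤ) ^ 2)).sum)) :
    (∑ s : Fin k, ((μ s).head! : ℤ)) > ((k : ℤ) - 2) * (n : ℤ) :=
  stmt_1_general n k μ hsorted hsum hrigid
end

section
/- Let n ≥ 2 and k ≥ 1 be integers and let μ¹, …, μᵏ be partitions of n, each having at least two parts (equivalently, the largest part of each μˢ is at most n−1). If the rigidity condition d_μ = 0 holds, i.e. (k−2)·n² + 2 = Σ_{s=1}^{k} Σ_i (μ_iˢ)², then k ≤ n + 1 (Goursat's bound on the number of singular points of a rigid local system of rank n on the punctured projective line). -/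
/-!
A partition `a :: t` of `n` with `0 < a < n` has `Σ x² ≤ a² + (n - a)² ≤ (n - 1)² + 1`,
the last step because `a (n - a) ≥ n - 1`. Summing over the `k` partitions, rigidity gives
`(k - 2) n² + 2 ≤ k (n² - 2n + 2)`, i.e. `k (n - 1) ≤ (n + 1)(n - 1)`, hence `k ≤ n + 1`.
-/

theorem List.sum_map_sq_le_sq_sum (l : List ℕ) : (l.map (· ^ 2)).sum ≤ l.sum ^ 2 := by
  induction l with
  | nil => simp
  | cons a t ih =>
    simp only [List.map_cons, List.sum_cons]
    nlinarith [Nat.zero_le (a * t.sum)]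

theorem Nat.sq_add_sq_add_two_mul_le {a b : ℕ} (ha : 0 < a) (hb : 0 < b) :
    a ^ 2 + b ^ 2 + 2 * (a + b) ≤ (a + b) ^ 2 + 2 := by
  nlinarith

theorem List.sum_map_sq_add_two_mul_le {l : List ℕ} (hpos : ∀ x ∈ l, 0 < x)
    (hhead : l.head! < l.sum) :
    (l.map (· ^ 2)).sum + 2 * l.sum ≤ l.sum ^ 2 + 2 := by
  cases l with
  | nil => simp at hhead
  | cons a t =>
    simp only [List.head!_cons, List.sum_cons] at hhead
    simp only [List.map_cons, List.sum_cons]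
    have ha : 0 < a := hpos a List.mem_cons_self
    have hsq := Nat.sq_add_sq_add_two_mul_le ha (b := t.sum) (by omega)
    have htail := t.sum_map_sq_le_sq_sum
    omega

-- The left side elaborates, as in `stmt_2`, to a map over `l` coerced to `List ℤ`.
theorem List.cast_sum_map_sq (l : List ℕ) :
    (l.map fun x => (x : ℤ) ^ 2).sum = ((l.map (· ^ 2)).sum : ℕ) := by
  induction l with
  | nil => simp
  | cons a t ih => simp_all

theorem stmt_2_general (n k : ℕ) (hn : 2 ≤ n) (μ : Fin k → List ℕ)
    (hpos : ∀ s, ∀ x ∈ μ s, 1 ≤ x)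
    (hsum : ∀ s, (μ s).sum = n)
    (htwo : ∀ s, (μ s).head! ≤ n - 1)
    (hrigid : ((k : ℤ) - 2) * (n : ℤ) ^ 2 + 2 =
      ∑ s : Fin k, (((μ s).map (fun x => (x : ℤ) ^ 2)).sum)) :
    k ≤ n + 1 := by
  have hbound (s : Fin k) :
      ((μ s).map (fun x => (x : ℤ) ^ 2)).sum ≤ (n : ℤ) ^ 2 - 2 * n + 2 := by
    have hhead : (μ s).head! < (μ s).sum := by have := htwo s; rw [hsum s]; omega
    have hnat := List.sum_map_sq_add_two_mul_le (hpos s) hhead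
    rw [hsum s] at hnat
    have hint := (Nat.cast_le (α := ℤ)).mpr hnat
    simp only [Nat.cast_add, Nat.cast_mul, Nat.cast_pow, Nat.cast_ofNat] at hint
    rw [List.cast_sum_map_sq]
    linarith
  have htotal : ((k : ℤ) - 2) * (n : ℤ) ^ 2 + 2 ≤ k * ((n : ℤ) ^ 2 - 2 * n + 2) := by
    rw [hrigid]
    simpa using Finset.sum_le_sum fun s (_ : s ∈ Finset.univ) => hbound s
  have hn' : (2 : ℤ) ≤ n := by exact_mod_cast hn
  have : (k : ℤ) ≤ n + 1 := by nlinarith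
  exact_mod_cast this

/-- Goursat's bound: if `μ¹, …, μᵏ` are partitions of `n ≥ 2`, each with at
least two parts (largest part at most `n−1`), satisfying the rigidity condition
`(k−2)·n² + 2 = Σ_s Σ_i (μᵢˢ)²`, then `k ≤ n + 1`. -/
theorem stmt_2 (n k : ℕ) (hn : 2 ≤ n) (hk : 1 ≤ k) (μ : Fin k → List ℕ)
    (hsorted : ∀ s, (μ s).Pairwise (· ≥ ·))
    (hpos : ∀ s, ∀ x ∈ μ s, 1 ≤ x)
    (hsum : ∀ s, (μ s).sum = n)
    (htwo : ∀ s, (μ s).head! ≤ n - 1)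
    (hrigid : ((k : ℤ) - 2) * (n : ℤ) ^ 2 + 2 =
      ∑ s : Fin k, (((μ s).map (fun x => (x : ℤ) ^ 2)).sum)) :
    k ≤ n + 1 :=
  stmt_2_general n k hn μ hpos hsum htwo hrigid
end

section
/- Let T0 and T1 be the Goursat matrices with parameters a1, a2, b, A, B, C, D ∈ ℂ, and assume a1 ∉ {0, 1}, a2 ∉ {0, 1}, a1 ≠ a2, and b ∉ {0, 1}. Then the pair (T0, T1) is irreducible (the only subspaces of ℂ⁴ invariant under both T0 and T1 are 0 and ℂ⁴) if and only if B·C·(AD − BC)·(AD − BC − A − D + 1) ≠ 0. -/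
open Matrix

/-- Goursat's matrix `T0` with parameters `a1, a2, b, A, B, C, D`. -/
noncomputable def goursatT0 (a1 a2 A B C D : ℂ) : Matrix (Fin 4) (Fin 4) ℂ :=
  !![1, 0, A * (1 - a1), B * (1 - a2);
     0, 1, C * (1 - a1), D * (1 - a2);
     0, 0, a1, 0;
     0, 0, 0, a2]

/-- Goursat's matrix `T1` with parameter `b`. -/
noncomputable def goursatT1 (b : ℂ) : Matrix (Fin 4) (Fin 4) ℂ :=
  !![b, 0, 0, 0;
     0, b, 0, 0;
     1 - b, 0, 1, 0;
     0, 1 - b, 0, 1]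

/-!
With coordinates indexed by `Fin 4`: `T0` is the identity on `span(e₀, e₁)` and has the
eigenvectors `ω₁ = goursatEigenvec₁ A C = (-A, -C, 1, 0)` and
`ω₂ = goursatEigenvec₂ B D = (-B, -D, 0, 1)` for `a1`, `a2`, while `T1` is the
identity on `span(e₂, e₃)` and multiplication by `b` on a complement. Polynomials in `T0` and `T1`
thus project an invariant subspace `V` onto these eigenspaces, so a nonzero `V` contains `ω₁` or
`ω₂`. Projecting `ω₁` onto `span(e₂, e₃)` and then onto the `a2`-eigenline gives `-C • ω₂`, and
symmetrically for `ω₂`; hence `V` contains both. Their projections onto `span(e₂, e₃)` span it iff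
`AD - BC - A - D + 1 ≠ 0`, and then `e₂ - ω₁ = (A, C, 0, 0)`, `e₃ - ω₂ = (B, D, 0, 0)` span
`span(e₀, e₁)` iff `AD - BC ≠ 0`.

Conversely, if one of the four factors vanishes, the kernel of an explicit matrix `F` with one or
two rows satisfying `F * Tᵢ = Gᵢ * F` is a proper invariant subspace.
-/

def IsIrreduciblePair {K n : Type*} [Field K] [Fintype n] (T₀ T₁ : Matrix n n K) : Prop :=
  ∀ V : Submodule K (n → K), (∀ v ∈ V, T₀ *ᵥ v ∈ V) → (∀ v ∈ V, T₁ *ᵥ v ∈ V) → V = ⊥ ∨ V = ⊤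

theorem not_isIrreduciblePair_of_mul_eq_mul {K n m : Type*} [Field K] [Fintype n] [DecidableEq n]
    [Fintype m] {T₀ T₁ : Matrix n n K} (F : Matrix m n K) (G₀ G₁ : Matrix m m K)
    (hmn : Fintype.card m < Fintype.card n) (hF : F ≠ 0)
    (h₀ : F * T₀ = G₀ * F) (h₁ : F * T₁ = G₁ * F) :
    ¬ IsIrreduciblePair T₀ T₁ := by
  have hinv : ∀ {T : Matrix n n K} {G : Matrix m m K}, F * T = G * F →
      ∀ v ∈ LinearMap.ker (toLin' F), T *ᵥ v ∈ LinearMap.ker (toLin' F) := by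
    intro T G h v hv
    rw [LinearMap.mem_ker, toLin'_apply] at hv ⊢
    rw [mulVec_mulVec, h, ← mulVec_mulVec, hv, mulVec_zero]
  intro hirr
  rcases hirr _ (hinv h₀) (hinv h₁) with hbot | htop
  · exact LinearMap.ker_ne_bot_of_finrank_lt (by simpa using hmn) hbot
  · exact hF (toLin'.map_eq_zero_iff.1 (LinearMap.ker_eq_top.1 htop))

theorem Submodule.mem_and_mem_of_det_ne_zero {K M : Type*} [Field K] [AddCommGroup M]
    [Module K M] {V : Submodule K M} {x y : M} {p q r s : K} (h₁ : p • x + q • y ∈ V)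
    (h₂ : r • x + s • y ∈ V) (hdet : p * s - q * r ≠ 0) : x ∈ V ∧ y ∈ V := by
  constructor
  · refine (V.smul_mem_iff hdet).1 ?_
    convert V.sub_mem (V.smul_mem s h₁) (V.smul_mem q h₂) using 1
    module
  · refine (V.smul_mem_iff hdet).1 ?_
    convert V.sub_mem (V.smul_mem p h₂) (V.smul_mem r h₁) using 1
    module

theorem Submodule.eq_top_of_forall_single_mem {K n : Type*} [Field K] [Fintype n]
    [DecidableEq n] {V : Submodule K (n → K)} (h : ∀ i, Pi.single i 1 ∈ V) : V = ⊤ := by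
  rw [eq_top_iff, ← (Pi.basisFun K n).span_eq, Submodule.span_le]
  rintro _ ⟨i, rfl⟩
  simpa using h i

theorem mulVec_sub_smul_mem {R n : Type*} [CommRing R] [Fintype n] {T : Matrix n n R}
    {V : Submodule R (n → R)} (hT : ∀ v ∈ V, T *ᵥ v ∈ V) (c : R) {v : n → R} (hv : v ∈ V) :
    T *ᵥ v - c • v ∈ V :=
  V.sub_mem (hT v hv) (V.smul_mem c hv)

def goursatEigenvec₁ (A C : ℂ) : Fin 4 → ℂ := ![-A, -C, 1, 0]

def goursatEigenvec₂ (B D : ℂ) : Fin 4 → ℂ := ![-B, -D, 0, 1]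

section Goursat

variable {a1 a2 b A B C D : ℂ} {V : Submodule ℂ (Fin 4 → ℂ)}

@[simp]
theorem goursatT0_mulVec (v : Fin 4 → ℂ) :
    goursatT0 a1 a2 A B C D *ᵥ v =
      ![v 0 + A * (1 - a1) * v 2 + B * (1 - a2) * v 3,
        v 1 + C * (1 - a1) * v 2 + D * (1 - a2) * v 3, a1 * v 2, a2 * v 3] := by
  ext i; fin_cases i <;> simp [goursatT0, mulVec, dotProduct, Fin.sum_univ_four]

@[simp]
theorem goursatT1_mulVec (v : Fin 4 → ℂ) :
    goursatT1 b *ᵥ v = ![b * v 0, b * v 1, (1 - b) * v 0 + v 2, (1 - b) * v 1 + v 3] := by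
  ext i; fin_cases i <;> simp [goursatT1, mulVec, dotProduct, Fin.sum_univ_four]

theorem not_isIrreduciblePair_goursat_of_B_eq_zero (hB : B = 0) :
    ¬ IsIrreduciblePair (goursatT0 a1 a2 A B C D) (goursatT1 b) := by
  subst hB
  refine not_isIrreduciblePair_of_mul_eq_mul !![1, 0, 0, 0; 0, 0, 1, 0]
    !![1, A * (1 - a1); 0, a1] !![b, 0; 1 - b, 1] (by simp)
    (fun h => by simpa using congr_fun₂ h 0 0) ?_ ?_
  · ext i j; fin_cases i <;> fin_cases j <;> simp [goursatT0, mul_apply, Fin.sum_univ_succ]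
  · ext i j; fin_cases i <;> fin_cases j <;> simp [goursatT1, mul_apply, Fin.sum_univ_succ]

theorem not_isIrreduciblePair_goursat_of_C_eq_zero (hC : C = 0) :
    ¬ IsIrreduciblePair (goursatT0 a1 a2 A B C D) (goursatT1 b) := by
  subst hC
  refine not_isIrreduciblePair_of_mul_eq_mul !![0, 1, 0, 0; 0, 0, 0, 1]
    !![1, D * (1 - a2); 0, a2] !![b, 0; 1 - b, 1] (by simp)
    (fun h => by simpa using congr_fun₂ h 0 1) ?_ ?_
  · ext i j; fin_cases i <;> fin_cases j <;> simp [goursatT0, mul_apply, Fin.sum_univ_succ]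
  · ext i j; fin_cases i <;> fin_cases j <;> simp [goursatT1, mul_apply, Fin.sum_univ_succ]

theorem not_isIrreduciblePair_goursat_of_det_eq_zero (hB : B ≠ 0) (hd : A * D - B * C = 0) :
    ¬ IsIrreduciblePair (goursatT0 a1 a2 A B C D) (goursatT1 b) := by
  refine not_isIrreduciblePair_of_mul_eq_mul !![D, -B, 0, 0] 1 !![b] (by simp)
    (fun h => hB (by simpa using congr_fun₂ h 0 1)) ?_ ?_
  · ext i j; fin_cases i; fin_cases j <;> simp [goursatT0, mul_apply, Fin.sum_univ_succ]
    · linear_combination (1 - a1) * hd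
    · ring
  · ext i j; fin_cases i; fin_cases j <;> simp [goursatT1, mul_apply, Fin.sum_univ_succ, mul_comm]

theorem not_isIrreduciblePair_goursat_of_det_sub_eq_zero (hC : C ≠ 0)
    (hd : A * D - B * C - A - D + 1 = 0) :
    ¬ IsIrreduciblePair (goursatT0 a1 a2 A B C D) (goursatT1 b) := by
  refine not_isIrreduciblePair_of_mul_eq_mul !![C, 1 - A, C, 1 - A] 1 1 (by simp)
    (fun h => hC (by simpa using congr_fun₂ h 0 0)) ?_ ?_
  · ext i j; fin_cases i; fin_cases j <;> simp [goursatT0, mul_apply, Fin.sum_univ_succ]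
    · ring
    · linear_combination (a2 - 1) * hd
  · ext i j; fin_cases i; fin_cases j <;> simp [goursatT1, mul_apply, Fin.sum_univ_succ] <;> ring

theorem goursatT1_proj_mem (hb : b ≠ 1) (hT₁ : ∀ v ∈ V, goursatT1 b *ᵥ v ∈ V)
    {v : Fin 4 → ℂ} (hv : v ∈ V) : ![0, 0, v 0 + v 2, v 1 + v 3] ∈ V := by
  refine (V.smul_mem_iff (sub_ne_zero.2 hb.symm)).1 ?_
  convert mulVec_sub_smul_mem hT₁ b hv using 1
  ext i; fin_cases i <;> simp <;> ring

theorem smul_goursatEigenvec₁_mem (ha1 : a1 ≠ 1) (ha : a1 ≠ a2)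
    (hT₀ : ∀ v ∈ V, goursatT0 a1 a2 A B C D *ᵥ v ∈ V) {v : Fin 4 → ℂ} (hv : v ∈ V) :
    v 2 • goursatEigenvec₁ A C ∈ V := by
  refine (V.smul_mem_iff (mul_ne_zero (sub_ne_zero.2 ha1) (sub_ne_zero.2 ha))).1 ?_
  convert mulVec_sub_smul_mem hT₀ 1 (mulVec_sub_smul_mem hT₀ a2 hv) using 1
  ext i; fin_cases i <;> simp [goursatEigenvec₁, vecHead, vecTail] <;> ring

theorem smul_goursatEigenvec₂_mem (ha2 : a2 ≠ 1) (ha : a1 ≠ a2)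
    (hT₀ : ∀ v ∈ V, goursatT0 a1 a2 A B C D *ᵥ v ∈ V) {v : Fin 4 → ℂ} (hv : v ∈ V) :
    v 3 • goursatEigenvec₂ B D ∈ V := by
  refine (V.smul_mem_iff (mul_ne_zero (sub_ne_zero.2 ha2) (sub_ne_zero.2 ha.symm))).1 ?_
  convert mulVec_sub_smul_mem hT₀ 1 (mulVec_sub_smul_mem hT₀ a1 hv) using 1
  ext i; fin_cases i <;> simp [goursatEigenvec₂, vecHead, vecTail] <;> ring

theorem goursatEigenvec₂_mem_of_goursatEigenvec₁_mem (ha2 : a2 ≠ 1) (ha : a1 ≠ a2)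
    (hb : b ≠ 1) (hC : C ≠ 0) (hT₀ : ∀ v ∈ V, goursatT0 a1 a2 A B C D *ᵥ v ∈ V)
    (hT₁ : ∀ v ∈ V, goursatT1 b *ᵥ v ∈ V) (h₁ : goursatEigenvec₁ A C ∈ V) :
    goursatEigenvec₂ B D ∈ V := by
  have := smul_goursatEigenvec₂_mem ha2 ha hT₀ (goursatT1_proj_mem hb hT₁ h₁)
  exact (V.smul_mem_iff (neg_ne_zero.2 hC)).1 (by simpa [goursatEigenvec₁] using this)

theorem goursatEigenvec₁_mem_of_goursatEigenvec₂_mem (ha1 : a1 ≠ 1) (ha : a1 ≠ a2)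
    (hb : b ≠ 1) (hB : B ≠ 0) (hT₀ : ∀ v ∈ V, goursatT0 a1 a2 A B C D *ᵥ v ∈ V)
    (hT₁ : ∀ v ∈ V, goursatT1 b *ᵥ v ∈ V) (h₂ : goursatEigenvec₂ B D ∈ V) :
    goursatEigenvec₁ A C ∈ V := by
  have := smul_goursatEigenvec₁_mem ha1 ha hT₀ (goursatT1_proj_mem hb hT₁ h₂)
  exact (V.smul_mem_iff (neg_ne_zero.2 hB)).1 (by simpa [goursatEigenvec₂] using this)

theorem goursatEigenvec_mem_of_ne_bot (ha1 : a1 ≠ 1) (ha2 : a2 ≠ 1) (ha : a1 ≠ a2)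
    (hb : b ≠ 1) (hT₀ : ∀ v ∈ V, goursatT0 a1 a2 A B C D *ᵥ v ∈ V)
    (hT₁ : ∀ v ∈ V, goursatT1 b *ᵥ v ∈ V) (hV : V ≠ ⊥) :
    goursatEigenvec₁ A C ∈ V ∨ goursatEigenvec₂ B D ∈ V := by
  have of_mem {v} (hv : v ∈ V) (h : v 2 ≠ 0 ∨ v 3 ≠ 0) :
      goursatEigenvec₁ A C ∈ V ∨ goursatEigenvec₂ B D ∈ V :=
    h.imp (fun h => (V.smul_mem_iff h).1 (smul_goursatEigenvec₁_mem ha1 ha hT₀ hv))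
      (fun h => (V.smul_mem_iff h).1 (smul_goursatEigenvec₂_mem ha2 ha hT₀ hv))
  obtain ⟨v, hv, hv0⟩ := V.ne_bot_iff.1 hV
  by_cases h : v 2 ≠ 0 ∨ v 3 ≠ 0
  · exact of_mem hv h
  · simp only [not_or, not_not] at h
    refine of_mem (goursatT1_proj_mem hb hT₁ hv) ?_
    by_contra! h'
    exact hv0 (by ext i; fin_cases i <;> simp_all)

theorem eq_top_of_goursatEigenvec_mem (hb : b ≠ 1) (hd₁ : A * D - B * C ≠ 0)
    (hd₂ : A * D - B * C - A - D + 1 ≠ 0) (hT₁ : ∀ v ∈ V, goursatT1 b *ᵥ v ∈ V)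
    (h₁ : goursatEigenvec₁ A C ∈ V) (h₂ : goursatEigenvec₂ B D ∈ V) : V = ⊤ := by
  obtain ⟨he₂, he₃⟩ : Pi.single 2 1 ∈ V ∧ Pi.single 3 1 ∈ V := by
    refine Submodule.mem_and_mem_of_det_ne_zero (p := 1 - A) (q := -C) (r := -B) (s := 1 - D)
      ?_ ?_ (fun h => hd₂ (by linear_combination h))
    · convert goursatT1_proj_mem hb hT₁ h₁ using 1
      ext i; fin_cases i <;> simp [goursatEigenvec₁, neg_add_eq_sub]
    · convert goursatT1_proj_mem hb hT₁ h₂ using 1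
      ext i; fin_cases i <;> simp [goursatEigenvec₂, neg_add_eq_sub]
  obtain ⟨he₀, he₁⟩ : Pi.single 0 1 ∈ V ∧ Pi.single 1 1 ∈ V := by
    refine Submodule.mem_and_mem_of_det_ne_zero (p := A) (q := C) (r := B) (s := D)
      ?_ ?_ (fun h => hd₁ (by linear_combination h))
    · convert V.sub_mem he₂ h₁ using 1
      ext i; fin_cases i <;> simp [goursatEigenvec₁]
    · convert V.sub_mem he₃ h₂ using 1
      ext i; fin_cases i <;> simp [goursatEigenvec₂]
  refine Submodule.eq_top_of_forall_single_mem fun i => ?_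
  fin_cases i <;> assumption

theorem isIrreduciblePair_goursat (ha1 : a1 ≠ 1) (ha2 : a2 ≠ 1) (ha : a1 ≠ a2) (hb : b ≠ 1)
    (hB : B ≠ 0) (hC : C ≠ 0) (hd₁ : A * D - B * C ≠ 0) (hd₂ : A * D - B * C - A - D + 1 ≠ 0) :
    IsIrreduciblePair (goursatT0 a1 a2 A B C D) (goursatT1 b) := by
  intro V hT₀ hT₁
  refine or_iff_not_imp_left.2 fun hV => ?_
  have h₁ : goursatEigenvec₁ A C ∈ V :=
    (goursatEigenvec_mem_of_ne_bot ha1 ha2 ha hb hT₀ hT₁ hV).elim id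
      (goursatEigenvec₁_mem_of_goursatEigenvec₂_mem ha1 ha hb hB hT₀ hT₁)
  exact eq_top_of_goursatEigenvec_mem hb hd₁ hd₂ hT₁ h₁
    (goursatEigenvec₂_mem_of_goursatEigenvec₁_mem ha2 ha hb hC hT₀ hT₁ h₁)

end Goursat

theorem stmt_7_general (a1 a2 b A B C D : ℂ)
    (ha1' : a1 ≠ 1) (ha2' : a2 ≠ 1)
    (ha : a1 ≠ a2) (hb' : b ≠ 1) :
    (∀ V : Submodule ℂ (Fin 4 → ℂ),
        (∀ v ∈ V, (goursatT0 a1 a2 A B C D).mulVec v ∈ V) →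
        (∀ v ∈ V, (goursatT1 b).mulVec v ∈ V) →
        V = ⊥ ∨ V = ⊤) ↔
      B * C * (A * D - B * C) * (A * D - B * C - A - D + 1) ≠ 0 := by
  change IsIrreduciblePair _ _ ↔ _
  simp only [ne_eq, mul_eq_zero, not_or]
  refine ⟨fun hirr => ?_, fun ⟨⟨⟨hB, hC⟩, hd₁⟩, hd₂⟩ =>
    isIrreduciblePair_goursat ha1' ha2' ha hb' hB hC hd₁ hd₂⟩
  have hB : B ≠ 0 := fun hB => not_isIrreduciblePair_goursat_of_B_eq_zero hB hirr
  have hC : C ≠ 0 := fun hC => not_isIrreduciblePair_goursat_of_C_eq_zero hC hirr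
  exact ⟨⟨⟨hB, hC⟩, fun hd => not_isIrreduciblePair_goursat_of_det_eq_zero hB hd hirr⟩,
    fun hd => not_isIrreduciblePair_goursat_of_det_sub_eq_zero hC hd hirr⟩

/-- Irreducibility criterion for the pair of Goursat matrices `(T0, T1)`:
assuming the genericity conditions on `a1, a2, b`, the pair is irreducible iff
`B·C·(AD − BC)·(AD − BC − A − D + 1) ≠ 0`. -/
theorem stmt_7 (a1 a2 b A B C D : ℂ)
    (ha1 : a1 ≠ 0) (ha1' : a1 ≠ 1) (ha2 : a2 ≠ 0) (ha2' : a2 ≠ 1)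
    (ha : a1 ≠ a2) (hb : b ≠ 0) (hb' : b ≠ 1) :
    (∀ V : Submodule ℂ (Fin 4 → ℂ),
        (∀ v ∈ V, (goursatT0 a1 a2 A B C D).mulVec v ∈ V) →
        (∀ v ∈ V, (goursatT1 b).mulVec v ∈ V) →
        V = ⊥ ∨ V = ⊤) ↔
      B * C * (A * D - B * C) * (A * D - B * C - A - D + 1) ≠ 0 :=
  stmt_7_general a1 a2 b A B C D ha1' ha2' ha hb'
end

section
/- Let T0 and T1 be the Goursat matrices with parameters a1, a2, b, A, B, C, D ∈ ℂ, with a1, a2, b all nonzero, and let q∞(x) := det(x·I₄ − (T0·T1)⁻¹) be the characteristic polynomial of (T0·T1)⁻¹. Then: (i) if a1 ≠ b, then ((b−1)(a1−1)(a2−a1)/(b²a1²a2))·A = (a1²·q∞(1/a1) − b²·q∞(1/b))/(a1 − b); (ii) if a2 ≠ b, then ((b−1)(a2−1)(a1−a2)/(b²a1a2²))·D = (a2²·q∞(1/a2) − b²·q∞(1/b))/(a2 − b); (iii) ((b−1)²(a1−1)(a2−1)/(b²a1a2))·(AD − BC) = b²·q∞(1/b). -/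
open Matrix Polynomial

/-- The characteristic polynomial `q∞` of `(T0·T1)⁻¹`, evaluated at `x`. -/
noncomputable def goursatQInf (a1 a2 b A B C D : ℂ) (x : ℂ) : ℂ :=
  ((goursatT0 a1 a2 A B C D * goursatT1 b)⁻¹).charpoly.eval x

/-!
With `M = T0·T1` we have `det M = a1·a2·b²` and, for `c ≠ 0`,
`det M · q∞(1/c) = c⁻⁴ · p(c)`, where `p` is the characteristic polynomial of `M`, here
`p(c) = ((c-b)(c-a1) - (1-b)(1-a1)A c)·((c-b)(c-a2) - (1-b)(1-a2)D c) - (1-b)²(1-a1)(1-a2)BC c²`.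
At `c = b` only the term in `AD - BC` survives. At `c = a1` the first factor reduces to its
`A`-term, and in `p(a1)/a1² - p(b)/b²` the `AD` and `BC` terms cancel, leaving a multiple of
`(a1 - b)·A`; symmetrically for `D` at `c = a2`.
-/

theorem Matrix.det_mul_eval_charpoly_inv {K n : Type*} [Field K] [Fintype n] [DecidableEq n]
    (M : Matrix n n K) (hM : IsUnit M.det) {c : K} (hc : c ≠ 0) :
    M.det * M⁻¹.charpoly.eval c⁻¹ = (-c⁻¹) ^ Fintype.card n * M.charpoly.eval c := by
  have h : M * (scalar n c⁻¹ - M⁻¹) = (-c⁻¹) • (scalar n c - M) := by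
    rw [Matrix.mul_sub, mul_nonsing_inv M hM, ← scalar_commute _ (Commute.all _), scalar_apply,
      scalar_apply, ← smul_one_eq_diagonal, ← smul_one_eq_diagonal, smul_mul, Matrix.one_mul,
      smul_sub, smul_smul, neg_mul, inv_mul_cancel₀ hc, neg_smul, one_smul, neg_smul,
      sub_neg_eq_add, neg_add_eq_sub]
  rw [eval_charpoly, eval_charpoly, ← det_mul, h, det_smul]

theorem goursatT0_mul_goursatT1 (a1 a2 b A B C D : ℂ) :
    goursatT0 a1 a2 A B C D * goursatT1 b =
      !![b + A * (1 - a1) * (1 - b), B * (1 - a2) * (1 - b), A * (1 - a1), B * (1 - a2);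
         C * (1 - a1) * (1 - b), b + D * (1 - a2) * (1 - b), C * (1 - a1), D * (1 - a2);
         a1 * (1 - b), 0, a1, 0;
         0, a2 * (1 - b), 0, a2] := by
  ext i j
  fin_cases i <;> fin_cases j <;>
    simp [goursatT0, goursatT1, mul_apply, Fin.sum_univ_four]

/- Subtracting `(1 - b)` times the last two columns from the first two leaves `(c - b) I₂` in the
top-left block, so the determinant is that of the 2×2 Schur complement scaled by `(c - b)²`. -/
theorem eval_charpoly_goursatT0_mul_goursatT1 (a1 a2 b A B C D c : ℂ) :
    (goursatT0 a1 a2 A B C D * goursatT1 b).charpoly.eval c =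
      ((c - b) * (c - a1) - (1 - b) * (1 - a1) * A * c) *
        ((c - b) * (c - a2) - (1 - b) * (1 - a2) * D * c) -
      (1 - b) ^ 2 * (1 - a1) * (1 - a2) * B * C * c ^ 2 := by
  rw [goursatT0_mul_goursatT1, eval_charpoly, det_succ_row_zero]
  simp [Fin.sum_univ_succ, det_fin_three, Fin.succAbove]
  ring

theorem det_goursatT0_mul_goursatT1 (a1 a2 b A B C D : ℂ) :
    (goursatT0 a1 a2 A B C D * goursatT1 b).det = a1 * a2 * b ^ 2 := by
  have h := eval_charpoly_goursatT0_mul_goursatT1 a1 a2 b A B C D 0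
  rw [eval_charpoly, map_zero, zero_sub, det_neg] at h
  simp only [Fintype.card_fin] at h
  linear_combination h

theorem goursatQInf_one_div (a1 a2 b A B C D : ℂ) (ha1 : a1 ≠ 0) (ha2 : a2 ≠ 0) (hb : b ≠ 0)
    {c : ℂ} (hc : c ≠ 0) :
    goursatQInf a1 a2 b A B C D (1 / c) =
      (((c - b) * (c - a1) - (1 - b) * (1 - a1) * A * c) *
        ((c - b) * (c - a2) - (1 - b) * (1 - a2) * D * c) -
      (1 - b) ^ 2 * (1 - a1) * (1 - a2) * B * C * c ^ 2) / (a1 * a2 * b ^ 2 * c ^ 4) := by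
  have hdet := det_goursatT0_mul_goursatT1 a1 a2 b A B C D
  have hunit : IsUnit (goursatT0 a1 a2 A B C D * goursatT1 b).det := by
    rw [hdet]
    exact Ne.isUnit (by positivity)
  have h := (goursatT0 a1 a2 A B C D * goursatT1 b).det_mul_eval_charpoly_inv hunit hc
  rw [hdet, eval_charpoly_goursatT0_mul_goursatT1, Fintype.card_fin] at h
  rw [goursatQInf, eq_div_iff (by positivity)]
  field_simp at h
  linear_combination h

/-- Recovery of `A`, `D` and `AD − BC` from the characteristic polynomial `q∞`
of `T∞ = (T0·T1)⁻¹`. -/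
theorem stmt_8 (a1 a2 b A B C D : ℂ)
    (ha1 : a1 ≠ 0) (ha2 : a2 ≠ 0) (hb : b ≠ 0) :
    ((a1 ≠ b →
      (b - 1) * (a1 - 1) * (a2 - a1) / (b ^ 2 * a1 ^ 2 * a2) * A =
        (a1 ^ 2 * goursatQInf a1 a2 b A B C D (1 / a1) -
          b ^ 2 * goursatQInf a1 a2 b A B C D (1 / b)) / (a1 - b)) ∧
    (a2 ≠ b →
      (b - 1) * (a2 - 1) * (a1 - a2) / (b ^ 2 * a1 * a2 ^ 2) * D =
        (a2 ^ 2 * goursatQInf a1 a2 b A B C D (1 / a2) -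
          b ^ 2 * goursatQInf a1 a2 b A B C D (1 / b)) / (a2 - b)) ∧
    ((b - 1) ^ 2 * (a1 - 1) * (a2 - 1) / (b ^ 2 * a1 * a2) * (A * D - B * C) =
      b ^ 2 * goursatQInf a1 a2 b A B C D (1 / b))) := by
  simp only [goursatQInf_one_div a1 a2 b A B C D ha1 ha2 hb, ha1, ha2, hb, ne_eq, not_false_eq_true]
  refine ⟨fun h1 => ?_, fun h2 => ?_, ?_⟩
  · have : a1 - b ≠ 0 := sub_ne_zero.mpr h1
    field_simp
    ring
  · have : a2 - b ≠ 0 := sub_ne_zero.mpr h2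
    field_simp
    ring
  · field_simp
    ring
end

section
/- Let T0 and T1 be the Goursat matrices with parameters a1, a2, b, A, B, C, D, where a1, a2, b ∈ ℂ satisfy |a1| = |a2| = |b| = 1, A, B, C, D are real numbers with AD − BC ≠ 0, and let H be the Goursat Hermitian matrix built from A, B, C, D. Then T0ᴴ·H·T0 = H and T1ᴴ·H·T1 = H, where ᴴ denotes conjugate transpose; that is, H is an invariant Hermitian form for the group generated by T0 and T1. -/
open Matrix

/-- The Goursat Hermitian matrix built from real parameters `A, B, C, D`, with
`E = (A+D−1)/(AD−BC)`. -/
noncomputable def goursatH (A B C D : ℝ) : Matrix (Fin 4) (Fin 4) ℝ :=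
  (A * D - B * C) •
    !![C * (1 - D * ((A + D - 1) / (A * D - B * C))),
         B * C * ((A + D - 1) / (A * D - B * C)), C * (1 - D), B * C;
       B * C * ((A + D - 1) / (A * D - B * C)),
         B * (1 - A * ((A + D - 1) / (A * D - B * C))), B * C, B * (1 - A);
       C * (1 - D), B * C, C * (1 - D), B * C;
       B * C, B * (1 - A), B * C, B * (1 - A)]

/-!
Split `ℂ⁴ = ℂ² ⊕ ℂ²`. Then `H = (P Q; Q Q)` with `P, Q` Hermitian, `T1 = (b, 0; 1 - b, 1)` and
`T0 = (1, K (1 - Δ); 0, Δ)` with `K = (A B; C D)` and `Δ = diag(a1, a2)`. For `T1` the invariance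
reduces to `|b|² P + (1 - |b|²) Q = P`. For `T0`, the value of `E` is exactly what makes `P K = Q`;
given this, the invariance reduces to `Δᴴ (Q - Q K) Δ = Q - Q K`, which holds because `Q - Q K`
is diagonal and `a1, a2` are unimodular.
-/

namespace Matrix

variable {m n R : Type*} [Fintype m] [Fintype n]

section Star

variable [Mul R] [AddCommMonoid R] [Star R]

def PreservesForm (T H : Matrix n n R) : Prop :=
  Tᴴ * H * T = H

theorem preservesForm_reindex_iff (e : m ≃ n) (T H : Matrix m m R) :
    PreservesForm (reindex e e T) (reindex e e H) ↔ PreservesForm T H := by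
  have h : (reindex e e T)ᴴ * reindex e e H * reindex e e T = reindex e e (Tᴴ * H * T) := by
    simp only [reindex_apply, conjTranspose_submatrix, submatrix_mul_equiv]
  rw [PreservesForm, PreservesForm, h, (reindex e e).injective.eq_iff]

end Star

variable [DecidableEq n]

theorem preservesForm_fromBlocks_upper [Ring R] [StarRing R] {P Q K Δ : Matrix n n R}
    (hP : P.IsHermitian) (hQ : Q.IsHermitian) (hPK : P * K = Q)
    (hΔ : Δᴴ * (Q - Q * K) * Δ = Q - Q * K) :
    PreservesForm (fromBlocks 1 (K * (1 - Δ)) 0 Δ) (fromBlocks P Q Q Q) := by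
  have hKP : Kᴴ * P = Q := by rw [← hP.eq, ← conjTranspose_mul, hPK, hQ.eq]
  have hKQ : Kᴴ * Q = Q * K := by rw [← hPK, ← Matrix.mul_assoc, hKP, hPK]
  simp only [PreservesForm, fromBlocks_conjTranspose, fromBlocks_multiply, conjTranspose_one,
    one_mul, conjTranspose_zero, zero_mul, add_zero, mul_one, mul_zero, conjTranspose_mul,
    conjTranspose_sub, fromBlocks_inj, true_and]
  refine ⟨?_, ?_, ?_⟩
  · rw [← Matrix.mul_assoc, hPK]
    noncomm_ring
  · rw [Matrix.mul_assoc, hKP]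
    noncomm_ring
  · rw [Matrix.mul_assoc _ Kᴴ, Matrix.mul_assoc _ Kᴴ, hKP, hKQ]
    calc _ = Q * K + Δᴴ * (Q - Q * K) * Δ := by noncomm_ring
      _ = Q := by rw [hΔ]; abel

section CommRing

variable [CommRing R] [StarRing R]

theorem preservesForm_fromBlocks_lower {b : R} (hb : star b * b = 1) (P Q : Matrix n n R) :
    PreservesForm (fromBlocks (b • 1) 0 ((1 - b) • 1) 1) (fromBlocks P Q Q Q) := by
  simp only [PreservesForm, fromBlocks_conjTranspose, fromBlocks_multiply, conjTranspose_smul,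
    conjTranspose_one, Algebra.smul_mul_assoc, one_mul, star_sub, star_one, Algebra.mul_smul_comm,
    mul_one, smul_add, smul_add_one_sub_smul, mul_zero, zero_add, conjTranspose_zero, zero_mul,
    fromBlocks_inj, and_self, and_true]
  linear_combination (norm := module) hb • (P - Q)

theorem IsDiag.conjTranspose_diagonal_mul_mul_diagonal {X : Matrix n n R} (hX : X.IsDiag)
    {a : n → R} (ha : ∀ i, star (a i) * a i = 1) : (diagonal a)ᴴ * X * diagonal a = X := by
  rw [← hX.diagonal_diag, diagonal_conjTranspose, diagonal_mul_diagonal, diagonal_mul_diagonal]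
  congr 1
  ext i
  rw [mul_right_comm, Pi.star_apply, ha, one_mul]

end CommRing

end Matrix

section

variable {R : Type*} [CommRing R]

def goursatK (A B C D : R) : Matrix (Fin 2) (Fin 2) R :=
  !![A, B; C, D]

def goursatQ (A B C D : R) : Matrix (Fin 2) (Fin 2) R :=
  (A * D - B * C) • !![C * (1 - D), B * C; B * C, B * (1 - A)]

theorem isDiag_goursatQ_sub_goursatQ_mul_goursatK (A B C D : R) :
    (goursatQ A B C D - goursatQ A B C D * goursatK A B C D).IsDiag := by
  intro i j hij
  fin_cases i <;> fin_cases j <;> simp_all [goursatQ, goursatK] <;> ring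

end

section

variable {F : Type*} [Field F]

def goursatE (A B C D : F) : F :=
  (A + D - 1) / (A * D - B * C)

def goursatP (A B C D : F) : Matrix (Fin 2) (Fin 2) F :=
  (A * D - B * C) •
    !![C * (1 - D * goursatE A B C D), B * C * goursatE A B C D;
       B * C * goursatE A B C D, B * (1 - A * goursatE A B C D)]

theorem goursatP_mul_goursatK {A B C D : F} (h : A * D - B * C ≠ 0) :
    goursatP A B C D * goursatK A B C D = goursatQ A B C D := by
  ext i j
  fin_cases i <;> fin_cases j <;> simp [goursatP, goursatQ, goursatK, goursatE] <;>
    field_simp <;> ring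

variable [StarRing F] {A B C D : F}

theorem isHermitian_goursatP (hA : IsSelfAdjoint A) (hB : IsSelfAdjoint B)
    (hC : IsSelfAdjoint C) (hD : IsSelfAdjoint D) : (goursatP A B C D).IsHermitian := by
  ext i j
  fin_cases i <;> fin_cases j <;>
    simp [goursatP, goursatE, hA.star_eq, hB.star_eq, hC.star_eq, hD.star_eq, star_div₀]

theorem isHermitian_goursatQ (hA : IsSelfAdjoint A) (hB : IsSelfAdjoint B)
    (hC : IsSelfAdjoint C) (hD : IsSelfAdjoint D) : (goursatQ A B C D).IsHermitian := by
  ext i j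
  fin_cases i <;> fin_cases j <;> simp [goursatQ, hA.star_eq, hB.star_eq, hC.star_eq, hD.star_eq]

end

theorem fromBlocks_eq_reindex_goursatT0 (a1 a2 A B C D : ℂ) :
    fromBlocks 1 (goursatK A B C D * (1 - diagonal ![a1, a2])) 0 (diagonal ![a1, a2]) =
      reindex finSumFinEquiv.symm finSumFinEquiv.symm (goursatT0 a1 a2 A B C D) := by
  ext (i | i) (j | j) <;> fin_cases i <;> fin_cases j <;>
    simp only [reindex_apply, submatrix_apply, Equiv.symm_symm, finSumFinEquiv_apply_left,
      finSumFinEquiv_apply_right] <;>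
    simp [goursatT0, goursatK, vecMul, dotProduct, Fin.sum_univ_two, diagonal_apply]

theorem fromBlocks_eq_reindex_goursatT1 (b : ℂ) :
    (fromBlocks (b • 1) 0 ((1 - b) • 1) 1 : Matrix (Fin 2 ⊕ Fin 2) (Fin 2 ⊕ Fin 2) ℂ) =
      reindex finSumFinEquiv.symm finSumFinEquiv.symm (goursatT1 b) := by
  ext (i | i) (j | j) <;> fin_cases i <;> fin_cases j <;>
    simp only [reindex_apply, submatrix_apply, Equiv.symm_symm, finSumFinEquiv_apply_left,
      finSumFinEquiv_apply_right] <;>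
    simp [goursatT1]

theorem fromBlocks_eq_reindex_goursatH (A B C D : ℝ) :
    fromBlocks (goursatP (A : ℂ) B C D) (goursatQ (A : ℂ) B C D) (goursatQ (A : ℂ) B C D)
        (goursatQ (A : ℂ) B C D) =
      reindex finSumFinEquiv.symm finSumFinEquiv.symm ((goursatH A B C D).map Complex.ofReal) := by
  ext (i | i) (j | j) <;> fin_cases i <;> fin_cases j <;>
    simp only [reindex_apply, submatrix_apply, Equiv.symm_symm, finSumFinEquiv_apply_left,
      finSumFinEquiv_apply_right] <;>
    simp [goursatH, goursatP, goursatQ, goursatE]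

/-- When `|a1| = |a2| = |b| = 1` and `A, B, C, D` are real with `AD − BC ≠ 0`,
the Goursat Hermitian matrix `H` is invariant under the Goursat matrices:
`T0ᴴ H T0 = H` and `T1ᴴ H T1 = H`. -/
theorem stmt_10 (a1 a2 b : ℂ) (A B C D : ℝ)
    (ha1 : ‖a1‖ = 1) (ha2 : ‖a2‖ = 1)
    (hb : ‖b‖ = 1) (h : A * D - B * C ≠ 0) :
    (goursatT0 a1 a2 (A : ℂ) (B : ℂ) (C : ℂ) (D : ℂ))ᴴ *
        ((goursatH A B C D).map Complex.ofReal) *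
        goursatT0 a1 a2 (A : ℂ) (B : ℂ) (C : ℂ) (D : ℂ) =
      (goursatH A B C D).map Complex.ofReal ∧
    (goursatT1 b)ᴴ * ((goursatH A B C D).map Complex.ofReal) * goursatT1 b =
      (goursatH A B C D).map Complex.ofReal := by
  have unimodular {z : ℂ} (hz : ‖z‖ = 1) : star z * z = 1 := by
    simpa [hz] using Complex.conj_mul' z
  have hA := Complex.conj_ofReal A
  have hB := Complex.conj_ofReal B
  have hC := Complex.conj_ofReal C
  have hD := Complex.conj_ofReal D
  have hT0 := preservesForm_fromBlocks_upper (isHermitian_goursatP hA hB hC hD)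
    (isHermitian_goursatQ hA hB hC hD) (goursatP_mul_goursatK (by exact_mod_cast h))
    ((isDiag_goursatQ_sub_goursatQ_mul_goursatK _ _ _ _).conjTranspose_diagonal_mul_mul_diagonal
      (a := ![a1, a2]) (Fin.forall_fin_two.2 ⟨unimodular ha1, unimodular ha2⟩))
  have hT1 :=
    preservesForm_fromBlocks_lower (unimodular hb) (goursatP (A : ℂ) B C D) (goursatQ (A : ℂ) B C D)
  rw [fromBlocks_eq_reindex_goursatT0, fromBlocks_eq_reindex_goursatH,
    preservesForm_reindex_iff] at hT0
  rw [fromBlocks_eq_reindex_goursatT1, fromBlocks_eq_reindex_goursatH,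
    preservesForm_reindex_iff] at hT1
  exact ⟨hT0, hT1⟩
end

section
/- Let A, B, C, D be real numbers with AD − BC ≠ 0, and let H be the Goursat Hermitian matrix built from A, B, C, D (a real symmetric 4×4 matrix). Then H is definite (i.e. H or −H is positive definite) if and only if all of the following hold: 0 < A < 1, 0 < D < 1, 0 < BC < AD, and 0 < BC < (1−A)(1−D). -/
/-! With `K = (1 - A)(1 - D) - BC` and `Δ = AD - BC`, the quadratic form of `H` is
`K·q₁(x₀, x₁) + Δ·q₂(x₀ + x₂, x₁ + x₃)` for two binary forms `q₁, q₂`. The substitution is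
invertible, so `H` is positive definite iff both scaled binary forms are, i.e. iff their leading
coefficients and discriminants have the right signs; the discriminants are `K²·BC·Δ` and
`Δ²·BC·K`. Conjugating by `diag(1, -1, 1, -1)` turns `-H` into the matrix for `(A, -B, -C, D)`,
so the two cases of definiteness differ only by the sign of `C`. -/

open Matrix

theorem binary_form_pos_iff (a b c : ℝ) :
    (∀ u v : ℝ, (u, v) ≠ 0 → 0 < a * u ^ 2 + 2 * b * u * v + c * v ^ 2) ↔
      0 < a ∧ b ^ 2 < a * c := by
  constructor
  · intro h
    have ha : 0 < a := by simpa using h 1 0 (by simp)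
    -- the form takes the value `a * (a * c - b ^ 2)` at `(-b, a)`
    have hdet : 0 < a * (a * c - b ^ 2) := by nlinarith [h (-b) a (by simp [ha.ne'])]
    exact ⟨ha, by nlinarith [pos_of_mul_pos_right hdet ha.le]⟩
  · rintro ⟨ha, hdet⟩ u v huv
    have hsq : a * (a * u ^ 2 + 2 * b * u * v + c * v ^ 2) =
        (a * u + b * v) ^ 2 + (a * c - b ^ 2) * v ^ 2 := by ring
    have hpos : 0 < (a * u + b * v) ^ 2 + (a * c - b ^ 2) * v ^ 2 := by
      rcases eq_or_ne v 0 with rfl | hv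
      · have hu : u ≠ 0 := by simpa using huv
        simp only [mul_zero, add_zero, ne_eq, OfNat.ofNat_ne_zero, not_false_eq_true, zero_pow]
        positivity
      · exact add_pos_of_nonneg_of_pos (sq_nonneg _) (mul_pos (by linarith) (by positivity))
    exact pos_of_mul_pos_right (hsq ▸ hpos) ha.le

theorem forall_fin_four_pos_add_iff {f g : ℝ → ℝ → ℝ} (hf : f 0 0 = 0) (hg : g 0 0 = 0) :
    (∀ x : Fin 4 → ℝ, x ≠ 0 → 0 < f (x 0) (x 1) + g (x 0 + x 2) (x 1 + x 3)) ↔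
      (∀ u v, (u, v) ≠ 0 → 0 < f u v) ∧ (∀ s t, (s, t) ≠ 0 → 0 < g s t) := by
  constructor
  · intro h
    refine ⟨fun u v huv => ?_, fun s t hst => ?_⟩
    · have hx : ![u, v, -u, -v] ≠ 0 := fun hx =>
        huv (by simpa using ⟨congrFun hx 0, congrFun hx 1⟩)
      simpa [hg] using h _ hx
    · have hx : ![0, 0, s, t] ≠ 0 := fun hx =>
        hst (by simpa using ⟨congrFun hx 2, congrFun hx 3⟩)
      simpa [hf] using h _ hx
  · rintro ⟨hf_pos, hg_pos⟩ x hx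
    have hg_nonneg : ∀ s t, 0 ≤ g s t := fun s t => by
      by_cases hst : (s, t) = 0
      · simp_all
      · exact (hg_pos s t hst).le
    by_cases h01 : (x 0, x 1) = 0
    · obtain ⟨h0, h1⟩ : x 0 = 0 ∧ x 1 = 0 := by simpa using h01
      have h23 : (x 2, x 3) ≠ 0 := by
        intro h23
        obtain ⟨h2, h3⟩ : x 2 = 0 ∧ x 3 = 0 := by simpa using h23
        exact hx (by ext i; fin_cases i <;> assumption)
      simpa [h0, h1, hf] using hg_pos _ _ h23
    · linarith [hf_pos _ _ h01, hg_nonneg (x 0 + x 2) (x 1 + x 3)]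

theorem goursat_conditions_iff {A B C D K Δ : ℝ} (hK : K = (1 - A) * (1 - D) - B * C)
    (hΔ : Δ = A * D - B * C) :
    ((0 < K * (C * D) ∧ (-(K * (B * C))) ^ 2 < K * (C * D) * (K * (A * B))) ∧
      (0 < Δ * (C * (1 - D)) ∧ (Δ * (B * C)) ^ 2 < Δ * (C * (1 - D)) * (Δ * (B * (1 - A))))) ↔
    0 < C ∧ (0 < A ∧ A < 1 ∧ 0 < D ∧ D < 1 ∧
        0 < B * C ∧ B * C < A * D ∧ 0 < B * C ∧ B * C < (1 - A) * (1 - D)) := by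
  have hdet₁ : K * (C * D) * (K * (A * B)) - (-(K * (B * C))) ^ 2 = K ^ 2 * (B * C * Δ) := by
    rw [hΔ]; ring
  have hdet₂ : Δ * (C * (1 - D)) * (Δ * (B * (1 - A))) - (Δ * (B * C)) ^ 2 =
      Δ ^ 2 * (B * C * K) := by
    rw [hK]; ring
  constructor
  · rintro ⟨⟨hKCD, hK₂⟩, hΔC, hΔ₂⟩
    have hBCΔ : 0 < B * C * Δ := pos_of_mul_pos_right (by linarith) (sq_nonneg K)
    have hBCK : 0 < B * C * K := pos_of_mul_pos_right (by linarith) (sq_nonneg Δ)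
    have hKAB : 0 < K * (A * B) := pos_of_mul_pos_right (by nlinarith) hKCD.le
    have hΔB : 0 < Δ * (B * (1 - A)) := pos_of_mul_pos_right (by nlinarith) hΔC.le
    have hKΔ : 0 < K * Δ := pos_of_mul_pos_right (by nlinarith) (sq_nonneg (B * C))
    have hD : 0 < D * (1 - D) :=
      pos_of_mul_pos_right (by nlinarith) (mul_nonneg hKΔ.le (sq_nonneg C))
    have hA : 0 < A * (1 - A) :=
      pos_of_mul_pos_right (by nlinarith) (mul_nonneg hKΔ.le (sq_nonneg B))
    have hD₀ : 0 < D := by nlinarith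
    have hD₁ : D < 1 := by nlinarith
    have hA₀ : 0 < A := by nlinarith
    have hA₁ : A < 1 := by nlinarith
    have hKC : 0 < K * C := pos_of_mul_pos_left (by nlinarith) hD₀.le
    have hKB : 0 < K * B := pos_of_mul_pos_left (by nlinarith) hA₀.le
    have hBC : 0 < B * C := pos_of_mul_pos_right (by nlinarith) (sq_nonneg K)
    have hK_pos : 0 < K := pos_of_mul_pos_right hBCK hBC.le
    exact ⟨pos_of_mul_pos_right hKC hK_pos.le, hA₀, hA₁, hD₀, hD₁, hBC,
      by nlinarith [pos_of_mul_pos_right hBCΔ hBC.le], hBC, by linarith⟩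
  · rintro ⟨hC, hA₀, hA₁, hD₀, hD₁, hBC, hBCΔ, -, hBCK⟩
    have hK_pos : 0 < K := by linarith
    have hΔ_pos : 0 < Δ := by linarith
    have hB : 0 < B := pos_of_mul_pos_left hBC hC.le
    refine ⟨⟨by positivity, ?_⟩, by have := sub_pos.2 hD₁; positivity, ?_⟩
    · nlinarith [mul_pos (pow_pos hK_pos 2) (mul_pos hBC hΔ_pos)]
    · nlinarith [mul_pos (pow_pos hΔ_pos 2) (mul_pos hBC hK_pos)]

theorem goursatH_isHermitian (A B C D : ℝ) : (goursatH A B C D).IsHermitian := by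
  ext i j
  fin_cases i <;> fin_cases j <;> simp [goursatH]

theorem dotProduct_goursatH_mulVec {A B C D : ℝ} (h : A * D - B * C ≠ 0) (x : Fin 4 → ℝ) :
    star x ⬝ᵥ (goursatH A B C D *ᵥ x) =
      (((1 - A) * (1 - D) - B * C) * (C * D) * x 0 ^ 2
        + 2 * (-(((1 - A) * (1 - D) - B * C) * (B * C))) * x 0 * x 1
        + ((1 - A) * (1 - D) - B * C) * (A * B) * x 1 ^ 2) +
      ((A * D - B * C) * (C * (1 - D)) * (x 0 + x 2) ^ 2
        + 2 * ((A * D - B * C) * (B * C)) * (x 0 + x 2) * (x 1 + x 3)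
        + (A * D - B * C) * (B * (1 - A)) * (x 1 + x 3) ^ 2) := by
  simp only [dotProduct, Pi.star_apply, star_trivial, mulVec, goursatH, Matrix.smul_apply, of_apply,
    cons_val', cons_val_fin_one, smul_eq_mul, Fin.sum_univ_four, Fin.isValue, cons_val_zero,
    cons_val_one, cons_val, mul_neg, neg_mul]
  field_simp
  ring

theorem goursatH_posDef_iff {A B C D : ℝ} (h : A * D - B * C ≠ 0) :
    (goursatH A B C D).PosDef ↔ 0 < C ∧ (0 < A ∧ A < 1 ∧ 0 < D ∧ D < 1 ∧
        0 < B * C ∧ B * C < A * D ∧ 0 < B * C ∧ B * C < (1 - A) * (1 - D)) := by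
  rw [posDef_iff_dotProduct_mulVec, and_iff_right (goursatH_isHermitian A B C D),
    ← goursat_conditions_iff rfl rfl, ← binary_form_pos_iff, ← binary_form_pos_iff,
    ← forall_fin_four_pos_add_iff (by ring) (by ring)]
  simp only [dotProduct_goursatH_mulVec h]

theorem neg_goursatH (A B C D : ℝ) :
    -goursatH A B C D =
      diagonal ![1, -1, 1, -1] * goursatH A (-B) (-C) D * star (diagonal ![1, -1, 1, -1]) := by
  ext i j
  fin_cases i <;> fin_cases j <;>
    simp [goursatH, star_eq_conjTranspose, diagonal_mul, mul_diagonal]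

theorem posDef_neg_goursatH_iff (A B C D : ℝ) :
    (-goursatH A B C D).PosDef ↔ (goursatH A (-B) (-C) D).PosDef := by
  rw [neg_goursatH]
  refine IsUnit.posDef_star_right_conjugate_iff (.of_mul_eq_one (diagonal ![1, -1, 1, -1]) ?_)
  rw [diagonal_mul_diagonal, ← diagonal_one]
  congr 1
  ext i
  fin_cases i <;> simp

/-- Definiteness criterion for the Goursat Hermitian matrix: `H` or `−H` is
positive definite iff `0 < A < 1`, `0 < D < 1`, `0 < BC < AD` and
`0 < BC < (1−A)(1−D)`. -/
theorem stmt_12 (A B C D : ℝ) (h : A * D - B * C ≠ 0) :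
    ((goursatH A B C D).PosDef ∨ (-(goursatH A B C D)).PosDef) ↔
      (0 < A ∧ A < 1 ∧ 0 < D ∧ D < 1 ∧
        0 < B * C ∧ B * C < A * D ∧
        0 < B * C ∧ B * C < (1 - A) * (1 - D)) := by
  have h' : A * D - -B * -C ≠ 0 := by rwa [neg_mul_neg]
  rw [posDef_neg_goursatH_iff, goursatH_posDef_iff h, goursatH_posDef_iff h', neg_mul_neg,
    Left.neg_pos_iff, ← or_and_right, and_iff_right_iff_imp]
  intro hcond
  exact (right_ne_zero_of_mul hcond.2.2.2.2.1.ne').lt_or_gt.symm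
end

section
/- Let A, B, C, D, E, F, G, H₀ be complex constants and let f = Σ_{n≥0} a_n xⁿ be a formal power series over ℂ satisfying the fourth-order linear differential equation x²(x−1)²·f⁗ + (Ax−B)·x(x−1)·f‴ + (Cx²−Dx+E)·f″ + (Fx−G)·f′ + H₀·f = 0 (with formal derivatives of power series). Then for every integer n ≥ 0 the coefficients satisfy the three-term recursion: (n+1)(n+2)·[n(n−1) + Bn + E]·a_{n+2} = (n+1)·[2n(n−1)(n−2) + (A+B)n(n−1) + Dn + G]·a_{n+1} − [n(n−1)(n−2)(n−3) + An(n−1)(n−2) + Cn(n−1) + Fn + H₀]·a_n. -/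
/-!
Expanding the operator, every term is a constant multiple of an Euler monomial `X ^ i * D^[i + k]`,
and the `n`-th coefficient of `X ^ i * D^[i + k] f` is the falling factorial
`(n + k)(n + k - 1)⋯(n - i + 1)` times `a_{n+k}`, for every `n`: when `n < i` both sides vanish.
So the `n`-th coefficient of the equation is the recursion itself, with no case split on small `n`.
-/

open PowerSeries

theorem PowerSeries.coeff_X_pow_mul_iterate_derivative {R : Type*} [CommSemiring R]
    (f : R⟦X⟧) (i k n : ℕ) :
    coeff n (X ^ i * (d⁄dX R)^[i + k] f) = (n + k).descFactorial (i + k) * coeff (n + k) f := by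
  rw [coeff_X_pow_mul']
  split_ifs with hin
  · obtain ⟨m, rfl⟩ := Nat.exists_eq_add_of_le' hin
    rw [Nat.add_sub_cancel, coeff_iterate_derivative, ← Nat.add_descFactorial_eq_ascFactorial]
    ring_nf
  · rw [Nat.descFactorial_eq_zero_iff_lt.mpr (by omega), Nat.cast_zero, zero_mul]

/-- The coefficients of a formal power series solution of the Goursat type II
differential equation `x²(x−1)²f⁗ + (Ax−B)x(x−1)f‴ + (Cx²−Dx+E)f″ + (Fx−G)f′
+ H₀f = 0` satisfy the three-term recursion. -/
theorem stmt_16 (A B C D E F G H₀ : ℂ) (f : PowerSeries ℂ)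
    (hode :
      (PowerSeries.X * (PowerSeries.X - 1)) ^ 2 *
          (PowerSeries.derivative ℂ (PowerSeries.derivative ℂ
            (PowerSeries.derivative ℂ (PowerSeries.derivative ℂ f)))) +
        (PowerSeries.C A * PowerSeries.X - PowerSeries.C B) *
          (PowerSeries.X * (PowerSeries.X - 1)) *
          (PowerSeries.derivative ℂ (PowerSeries.derivative ℂ
            (PowerSeries.derivative ℂ f))) +
        (PowerSeries.C C * PowerSeries.X ^ 2 - PowerSeries.C D * PowerSeries.X +
            PowerSeries.C E) *
          (PowerSeries.derivative ℂ (PowerSeries.derivative ℂ f)) +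
        (PowerSeries.C F * PowerSeries.X - PowerSeries.C G) *
          (PowerSeries.derivative ℂ f) +
        PowerSeries.C H₀ * f = 0) :
    ∀ n : ℕ,
      ((n : ℂ) + 1) * ((n : ℂ) + 2) *
          ((n : ℂ) * ((n : ℂ) - 1) + B * (n : ℂ) + E) *
          PowerSeries.coeff (n + 2) f =
        ((n : ℂ) + 1) *
            (2 * (n : ℂ) * ((n : ℂ) - 1) * ((n : ℂ) - 2) +
              (A + B) * (n : ℂ) * ((n : ℂ) - 1) + D * (n : ℂ) + G) *
            PowerSeries.coeff (n + 1) f -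
          ((n : ℂ) * ((n : ℂ) - 1) * ((n : ℂ) - 2) * ((n : ℂ) - 3) +
              A * (n : ℂ) * ((n : ℂ) - 1) * ((n : ℂ) - 2) +
              C * (n : ℂ) * ((n : ℂ) - 1) + F * (n : ℂ) + H₀) *
            PowerSeries.coeff n f := by
  intro n
  have hEuler : X ^ 4 * (d⁄dX ℂ)^[4 + 0] f - PowerSeries.C 2 * (X ^ 3 * (d⁄dX ℂ)^[3 + 1] f)
      + X ^ 2 * (d⁄dX ℂ)^[2 + 2] f + PowerSeries.C A * (X ^ 3 * (d⁄dX ℂ)^[3 + 0] f)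
      - PowerSeries.C A * (X ^ 2 * (d⁄dX ℂ)^[2 + 1] f)
      - PowerSeries.C B * (X ^ 2 * (d⁄dX ℂ)^[2 + 1] f)
      + PowerSeries.C B * (X ^ 1 * (d⁄dX ℂ)^[1 + 2] f)
      + PowerSeries.C C * (X ^ 2 * (d⁄dX ℂ)^[2 + 0] f)
      - PowerSeries.C D * (X ^ 1 * (d⁄dX ℂ)^[1 + 1] f)
      + PowerSeries.C E * (X ^ 0 * (d⁄dX ℂ)^[0 + 2] f)
      + PowerSeries.C F * (X ^ 1 * (d⁄dX ℂ)^[1 + 0] f)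
      - PowerSeries.C G * (X ^ 0 * (d⁄dX ℂ)^[0 + 1] f)
      + PowerSeries.C H₀ * (X ^ 0 * (d⁄dX ℂ)^[0 + 0] f) = 0 := by
    simp only [Function.iterate_succ_apply', Function.iterate_zero_apply, Nat.reduceAdd,
      map_ofNat]
    linear_combination hode
  have hcoeff := congrArg (coeff n) hEuler
  -- `-Nat.reduceAdd` keeps the exponents `i + k` in the shape the coefficient lemma expects.
  simp only [map_add, map_sub, coeff_C_mul, coeff_X_pow_mul_iterate_derivative, map_zero,
    -Nat.reduceAdd] at hcoeff
  simp only [← descPochhammer_eval_eq_descFactorial ℂ, descPochhammer_succ_eval,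
    descPochhammer_zero, Polynomial.eval_one, add_zero] at hcoeff
  push_cast at hcoeff
  linear_combination hcoeff
end

section
/- Let K and L be Bender's generators of Sp₄(ℤ): K is the 4×4 integer matrix with rows (1,0,0,0), (1,−1,0,0), (0,0,1,1), (0,0,0,−1), and L is the 4×4 integer matrix with rows (0,0,−1,0), (0,0,0,−1), (1,0,1,0), (0,1,0,0). Let T1 be the matrix with rows (1,0,1,0), (0,1,0,1), (−1,0,0,0), (0,−1,0,0) and T∞ the matrix with rows (−1,0,−1,−1), (0,0,0,−1), (1,0,0,0), (−1,1,0,0). Then, as matrices in GL₄(ℤ), T1 = (K·L⁻²)³·L⁻¹ and T∞ = (K·L⁻⁵)⁴. -/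
open Matrix

lemma one_fin_four' : (1 : Matrix (Fin 4) (Fin 4) ℤ) =
    !![1, 0, 0, 0; 0, 1, 0, 0; 0, 0, 1, 0; 0, 0, 0, 1] := by
  ext i j
  fin_cases i <;> fin_cases j <;> simp [Matrix.one_apply, Matrix.vecHead, Matrix.vecTail]

/-- Expression of the local monodromies `T1` and `T∞` of the Goursat type II
system with exponents `(1/6,5/6),(1/6,5/6),(1/5,2/5,3/5,4/5)` in terms of
Bender's generators `K`, `L` of `Sp₄(ℤ)`. -/
theorem stmt_18
    (K L T1 Tinf : Matrix (Fin 4) (Fin 4) ℤ)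
    (hK : K = !![1, 0, 0, 0; 1, -1, 0, 0; 0, 0, 1, 1; 0, 0, 0, -1])
    (hL : L = !![0, 0, -1, 0; 0, 0, 0, -1; 1, 0, 1, 0; 0, 1, 0, 0])
    (hT1 : T1 = !![1, 0, 1, 0; 0, 1, 0, 1; -1, 0, 0, 0; 0, -1, 0, 0])
    (hTinf : Tinf = !![-1, 0, -1, -1; 0, 0, 0, -1; 1, 0, 0, 0; -1, 1, 0, 0]) :
    IsUnit K.det ∧ IsUnit L.det ∧
    T1 = (K * (L⁻¹) ^ 2) ^ 3 * L⁻¹ ∧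
    Tinf = (K * (L⁻¹) ^ 5) ^ 4 := by
  subst hK hL hT1 hTinf
  have hLmul : (!![0, 0, -1, 0; 0, 0, 0, -1; 1, 0, 1, 0; 0, 1, 0, 0] :
      Matrix (Fin 4) (Fin 4) ℤ) *
      !![1, 0, 1, 0; 0, 0, 0, 1; -1, 0, 0, 0; 0, -1, 0, 0] = 1 := by
    rw [one_fin_four']; norm_num
  have hKmul : (!![1, 0, 0, 0; 1, -1, 0, 0; 0, 0, 1, 1; 0, 0, 0, -1] :
      Matrix (Fin 4) (Fin 4) ℤ) *
      !![1, 0, 0, 0; 1, -1, 0, 0; 0, 0, 1, 1; 0, 0, 0, -1] = 1 := by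
    rw [one_fin_four']; norm_num
  have hLi := inv_eq_right_inv hLmul
  refine ⟨Matrix.isUnit_det_of_right_inverse hKmul,
    Matrix.isUnit_det_of_right_inverse hLmul, ?_, ?_⟩
  · rw [hLi]; norm_num [pow_succ]
  · rw [hLi]; norm_num [pow_succ]
end

section
/- Let T0, T1, T∞ be the 4×4 integer matrices: T0 with rows (1,0,1,0), (1,1,1,1), (−1,0,0,−1), (0,0,0,1); T1 with rows (1,0,1,0), (0,1,0,1), (−1,0,0,0), (0,−1,0,0); T∞ with rows (−1,0,−1,−1), (0,0,0,−1), (1,0,0,0), (−1,1,0,0). Then: (i) T0·T1·T∞ = I₄; (ii) the characteristic polynomial of T0 is (x−1)²(x²−x+1); (iii) the characteristic polynomial of T1 is (x²−x+1)²; (iv) the characteristic polynomial of T∞ is x⁴+x³+x²+x+1. -/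
set_option maxHeartbeats 2000000

open Matrix Polynomial

/-- The integral realization of the Goursat type II rigid local system with
exponents `(1/6,5/6),(1/6,5/6),(1/5,2/5,3/5,4/5)`: the matrices satisfy
`T0·T1·T∞ = 1` and have the prescribed characteristic polynomials. -/
theorem stmt_19
    (T0 T1 Tinf : Matrix (Fin 4) (Fin 4) ℤ)
    (hT0 : T0 = !![1, 0, 1, 0; 1, 1, 1, 1; -1, 0, 0, -1; 0, 0, 0, 1])
    (hT1 : T1 = !![1, 0, 1, 0; 0, 1, 0, 1; -1, 0, 0, 0; 0, -1, 0, 0])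
    (hTinf : Tinf = !![-1, 0, -1, -1; 0, 0, 0, -1; 1, 0, 0, 0; -1, 1, 0, 0]) :
    T0 * T1 * Tinf = 1 ∧
    T0.charpoly = (X - 1) ^ 2 * (X ^ 2 - X + 1) ∧
    T1.charpoly = (X ^ 2 - X + 1) ^ 2 ∧
    Tinf.charpoly = X ^ 4 + X ^ 3 + X ^ 2 + X + 1 := by
  subst hT0 hT1 hTinf
  refine ⟨?_, ?_, ?_, ?_⟩
  · ext i j
    fin_cases i <;> fin_cases j <;>
      simp [Matrix.mul_apply, Fin.sum_univ_four, Matrix.one_apply,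
        Matrix.vecHead, Matrix.vecTail]
  all_goals
    have h1 : (Fin.succ 2 : Fin 4) = 3 := rfl
    have h2 : Fin.succAbove (2 : Fin 4) 2 = 3 := rfl
    have h3 : Fin.castSucc (2 : Fin 3) = 2 := rfl
    have h4 : Fin.succAbove (3 : Fin 4) 2 = 2 := rfl
    simp [Matrix.charpoly, Matrix.det_succ_row_zero, Fin.sum_univ_succ,
      charmatrix_apply, Matrix.one_apply, Matrix.diagonal_apply,
      Fin.succ_ne_zero, h1, h2, h3, h4]
    ring
end
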